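/- Let τ be the Thue–Morse word over {0,1} and let ψ be the morphism ψ(0) = 10, ψ(1) = 11 applied letter by letter to τ. Then the infinite word ψ(τ) contains no parameterized cube of length greater than 3: there is no fragment u₁u₂u₃ of ψ(τ) with |u₁| = |u₂| = |u₃| = k ≥ 2 such that both u₁u₂ and u₂u₃ are parameterized squares. -/

import Mathlib

/-- Words `u` and `v` are parameterized-equivalent if `|u| = |v|` and there is a bijection
`f : Alph(u) → Alph(v)` with `v[i] = f(u[i])` for all `i`; equivalently, `v = u.map f` for
some function `f` injective on the set of letters of `u`. -/
def ParamEquiv {α : Type*} (u v : List α) : Prop :=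
  ∃ f : α → α, Set.InjOn f {a | a ∈ u} ∧ v = u.map f

open Fin.NatCast in
/-- The Thue–Morse word: its `n`-th letter (`n ≥ 0`) is the parity of the number of ones in
the binary expansion of `n`. -/
def thueMorse (n : ℕ) : Fin 2 :=
  (((Nat.digits 2 n).count 1 : ℕ) : Fin 2)

/-- The infinite word `ψ(τ)`, where `τ` is the Thue–Morse word and `ψ` is the morphism
`0 ↦ 10, 1 ↦ 11` applied letter by letter: position `2n` carries the letter `1` and
position `2n+1` carries `τ(n)`. -/
def psiThueMorse (n : ℕ) : Fin 2 :=
  if n % 2 = 0 then 1 else thueMorse (n / 2)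

/-!
Over the alphabet `Fin 2`, a parameterized equivalence is a translation `a ↦ a + c`, so a
parameterized cube `u₁u₂u₃` of `ψ(τ)` with blocks of length `k` says `ψ(τ)(t + k) = ψ(τ)(t) + c`
across the fragment; the two constants for `u₁u₂` and `u₂u₃` agree because the even positions of
`ψ(τ)` all carry `1`. If `k` is even, even positions are matched with even ones, so `c = 0` and the
odd positions give a genuine cube of period `k / 2` in `τ`. If `k` is odd, every odd position of
the last two blocks is matched with an even one and therefore carries `1 + c`, giving three equal
consecutive letters of `τ`. Both are impossible because `τ` is cube-free.
-/

section

variable {α : Type*}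

def IsCubeAt (x : ℕ → α) (a p : ℕ) : Prop :=
  ∀ t, a ≤ t → t < a + 2 * p → x (t + p) = x t

def IsShiftedCubeAt [Add α] (x : ℕ → α) (c : α) (a p : ℕ) : Prop :=
  ∀ t, a ≤ t → t < a + 2 * p → x (t + p) = x t + c

theorem map_range_three_mul_eq_append {g : ℕ → α} {k : ℕ} {u₁ u₂ u₃ : List α}
    (h : (List.range (3 * k)).map g = u₁ ++ u₂ ++ u₃) (h₁ : u₁.length = k)
    (h₂ : u₂.length = k) :
    u₁ = (List.range k).map g ∧ u₂ = (List.range k).map (fun j => g (k + j)) ∧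
      u₃ = (List.range k).map (fun j => g (2 * k + j)) := by
  rw [show 3 * k = k + k + k by ring, List.range_add, List.range_add] at h
  simp only [List.map_append, List.map_map] at h
  obtain ⟨h₁₂, rfl⟩ := List.append_inj h.symm (by simp [h₁, h₂])
  obtain ⟨rfl, rfl⟩ := List.append_inj h₁₂ (by simp [h₁])
  refine ⟨rfl, rfl, ?_⟩
  simp only [Function.comp_def, two_mul, add_assoc]

theorem Set.InjOn.exists_add_eq_of_fin_two {s : Set (Fin 2)} {f : Fin 2 → Fin 2}
    (hf : s.InjOn f) : ∃ c, ∀ a ∈ s, f a = a + c := by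
  rcases s.eq_empty_or_nonempty with rfl | ⟨b, hb⟩
  · simp
  refine ⟨f b - b, fun a ha => ?_⟩
  by_cases hab : a = b
  · rw [hab, add_sub_cancel]
  · have := hf.ne ha hb hab
    omega

theorem ParamEquiv.exists_eq_map_add {u v : List (Fin 2)} (h : ParamEquiv u v) :
    ∃ c, v = u.map (· + c) := by
  obtain ⟨f, hf, rfl⟩ := h
  obtain ⟨c, hc⟩ := hf.exists_add_eq_of_fin_two
  exact ⟨c, List.map_congr_left hc⟩

end

theorem thueMorse_two_mul (n : ℕ) : thueMorse (2 * n) = thueMorse n := by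
  rcases Nat.eq_zero_or_pos n with rfl | hn
  · rfl
  · simp [thueMorse, Nat.digits_def' one_lt_two (by omega : 0 < 2 * n)]

theorem thueMorse_two_mul_add_one (n : ℕ) : thueMorse (2 * n + 1) = thueMorse n + 1 := by
  rw [thueMorse, Nat.digits_def' one_lt_two (by omega), show (2 * n + 1) / 2 = n by omega,
    show (2 * n + 1) % 2 = 1 by omega, List.count_cons_self]
  exact Fin.ext (by simp [thueMorse, Fin.val_add, Fin.val_natCast])

theorem thueMorse_not_isCubeAt_one (a : ℕ) : ¬IsCubeAt thueMorse a 1 := by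
  intro h
  have h₀ := h a le_rfl (by omega)
  have h₁ := h (a + 1) (by omega) (by omega)
  obtain ⟨s, rfl | rfl⟩ := Nat.even_or_odd' a
  · rw [thueMorse_two_mul_add_one, thueMorse_two_mul] at h₀
    omega
  · rw [show 2 * s + 1 + 1 = 2 * (s + 1) by ring, thueMorse_two_mul_add_one,
      thueMorse_two_mul] at h₁
    omega

theorem IsCubeAt.thueMorse_half {a m : ℕ} (h : IsCubeAt thueMorse a (2 * m)) :
    IsCubeAt thueMorse ((a + 1) / 2) m := by
  intro t ht₁ ht₂
  have := h (2 * t) (by omega) (by omega)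
  rwa [← mul_add, thueMorse_two_mul, thueMorse_two_mul] at this

/-- Reading a cube of period `2r + 1` at the even and at the odd positions gives
`τ(s + r) = τ(s) + 1 = τ(s + r + 1)`. -/
theorem IsCubeAt.thueMorse_odd {a r : ℕ} (hr : 0 < r) (h : IsCubeAt thueMorse a (2 * r + 1)) :
    IsCubeAt thueMorse ((a + 1) / 2 + r) 1 := by
  intro t ht₁ ht₂
  have heven := h (2 * (t - r)) (by omega) (by omega)
  have hodd := h (2 * (t - r) + 1) (by omega) (by omega)
  rw [show 2 * (t - r) + (2 * r + 1) = 2 * t + 1 by omega, thueMorse_two_mul_add_one,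
    thueMorse_two_mul] at heven
  rw [show 2 * (t - r) + 1 + (2 * r + 1) = 2 * (t + 1) by omega, thueMorse_two_mul,
    thueMorse_two_mul_add_one] at hodd
  omega

theorem thueMorse_not_isCubeAt {p : ℕ} (hp : 0 < p) (a : ℕ) : ¬IsCubeAt thueMorse a p := by
  induction p using Nat.strong_induction_on generalizing a with
  | _ p ih =>
  intro h
  obtain ⟨m, rfl | rfl⟩ := Nat.even_or_odd' p
  · exact ih m (by omega) (by omega) _ h.thueMorse_half
  · rcases Nat.eq_zero_or_pos m with rfl | hm
    · exact thueMorse_not_isCubeAt_one a h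
    · exact thueMorse_not_isCubeAt_one _ (h.thueMorse_odd hm)

theorem psiThueMorse_of_mod_two_eq_zero {n : ℕ} (hn : n % 2 = 0) : psiThueMorse n = 1 := by
  simp [psiThueMorse, hn]

theorem psiThueMorse_two_mul (n : ℕ) : psiThueMorse (2 * n) = 1 :=
  psiThueMorse_of_mod_two_eq_zero (by omega)

theorem psiThueMorse_two_mul_add_one (n : ℕ) : psiThueMorse (2 * n + 1) = thueMorse n := by
  simp [psiThueMorse, show (2 * n + 1) % 2 = 1 by omega, show (2 * n + 1) / 2 = n by omega]

theorem psiThueMorse_not_isShiftedCubeAt {p : ℕ} (hp : 2 ≤ p) (c : Fin 2) (a : ℕ) :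
    ¬IsShiftedCubeAt psiThueMorse c a p := by
  intro h
  obtain ⟨m, rfl | rfl⟩ := Nat.even_or_odd' p
  · have hc : c = 0 := by
      have := h (a + a % 2) (by omega) (by omega)
      rw [psiThueMorse_of_mod_two_eq_zero (by omega), psiThueMorse_of_mod_two_eq_zero (by omega)]
        at this
      omega
    refine thueMorse_not_isCubeAt (p := m) (by omega) (a / 2) fun t ht₁ ht₂ => ?_
    have := h (2 * t + 1) (by omega) (by omega)
    rwa [show 2 * t + 1 + 2 * m = 2 * (t + m) + 1 by ring, psiThueMorse_two_mul_add_one,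
      psiThueMorse_two_mul_add_one, hc, add_zero] at this
  · have hodd : ∀ s, a + (2 * m + 1) ≤ 2 * s + 1 → 2 * s + 1 < a + 3 * (2 * m + 1) →
        thueMorse s = 1 + c := by
      intro s hs₁ hs₂
      have := h (2 * (s - m)) (by omega) (by omega)
      rwa [show 2 * (s - m) + (2 * m + 1) = 2 * s + 1 by omega, psiThueMorse_two_mul_add_one,
        psiThueMorse_two_mul] at this
    refine thueMorse_not_isCubeAt_one ((a + 2 * m + 1) / 2) fun t ht₁ ht₂ => ?_
    rw [hodd t (by omega) (by omega), hodd (t + 1) (by omega) (by omega)]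

theorem psiThueMorse_isShiftedCubeAt_of_blocks {i k : ℕ} {c₁ c₂ : Fin 2} (hk : 2 ≤ k)
    (h₁ : ∀ j < k, psiThueMorse (i + (k + j)) = psiThueMorse (i + j) + c₁)
    (h₂ : ∀ j < k, psiThueMorse (i + (2 * k + j)) = psiThueMorse (i + (k + j)) + c₂) :
    IsShiftedCubeAt psiThueMorse c₁ i k := by
  have hc : c₂ = c₁ := by
    have h₁' := h₁ (i % 2) (by omega)
    have h₂' := h₂ (i % 2) (by omega)
    have e₀ : psiThueMorse (i + i % 2) = 1 := psiThueMorse_of_mod_two_eq_zero (by omega)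
    have e₂ : psiThueMorse (i + (2 * k + i % 2)) = 1 := psiThueMorse_of_mod_two_eq_zero (by omega)
    omega
  intro t ht₁ ht₂
  rcases lt_or_ge t (i + k) with ht | ht
  · have := h₁ (t - i) (by omega)
    rwa [show i + (k + (t - i)) = t + k by omega, show i + (t - i) = t by omega] at this
  · have := h₂ (t - i - k) (by omega)
    rwa [show i + (2 * k + (t - i - k)) = t + k by omega,
      show i + (k + (t - i - k)) = t by omega, hc] at this

/-- The word `ψ(τ)` contains no parameterized cube of length greater than 3: there is no
fragment `u₁ ++ u₂ ++ u₃` of `ψ(τ)` with `|u₁| = |u₂| = |u₃| = k ≥ 2` such that both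
`u₁u₂` and `u₂u₃` are parameterized squares. -/
theorem psiThueMorse_avoids_nontrivial_param_cubes :
    ¬∃ (i k : ℕ) (u₁ u₂ u₃ : List (Fin 2)), 2 ≤ k ∧
      (List.range (3 * k)).map (fun t => psiThueMorse (i + t)) = u₁ ++ u₂ ++ u₃ ∧
      u₁.length = k ∧ u₂.length = k ∧ u₃.length = k ∧
      ParamEquiv u₁ u₂ ∧ ParamEquiv u₂ u₃ := by
  rintro ⟨i, k, u₁, u₂, u₃, hk, hcube, h₁, h₂, -, hu₁₂, hu₂₃⟩
  obtain ⟨rfl, rfl, rfl⟩ := map_range_three_mul_eq_append hcube h₁ h₂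
  obtain ⟨c₁, hc₁⟩ := hu₁₂.exists_eq_map_add
  obtain ⟨c₂, hc₂⟩ := hu₂₃.exists_eq_map_add
  simp only [List.map_map, List.map_inj_left, List.mem_range, Function.comp_apply] at hc₁ hc₂
  exact psiThueMorse_not_isShiftedCubeAt hk c₁ i
    (psiThueMorse_isShiftedCubeAt_of_blocks hk hc₁ hc₂)
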